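/- In every finite sequential game, any pair of strategy profiles satisfying the Improvement and Atomicity properties also satisfies the Laziness, One Player, and Subgame Improvement properties; consequently, all X-dynamics with {I,A} ⊆ X ⊆ {I, SI, A, L, 1P} coincide with the {I,A}-dynamics. -/

import Mathlib

namespace SeqGame

inductive GameTree (N O : Type) : Type where
  | leaf (o : O) : GameTree N O
  | node (i : N) (children : List (GameTree N O)) : GameTree N O

namespace GameTree

variable {N O : Type}

/-- The subtree of `T` at position `p` (a list of child indices), if it exists. -/
def subtree : GameTree N O → List ℕ → Option (GameTree N O)
  | t, [] => some t
  | leaf _, _ :: _ => none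
  | node _ c, k :: p =>
    match getElem? c k with
    | some t => subtree t p
    | none => none

/-- A strategy profile: a choice of a child index at every position. -/
abbrev Profile := List ℕ → ℕ

/-- A profile is legal if it chooses an existing child at every internal node. -/
def Legal (T : GameTree N O) (s : Profile) : Prop :=
  ∀ p i c, T.subtree p = some (node i c) → s p < c.length

/-- The profiles `s` and `s'` differ at the (valid, internal) node `p`. -/
def Differs (T : GameTree N O) (s s' : Profile) (p : List ℕ) : Prop :=
  (∃ i c, T.subtree p = some (node i c)) ∧ s p ≠ s' p

/-- The outcome reached when playing according to the profile `s`. -/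
def outcome : GameTree N O → Profile → Option O
  | leaf o, _ => some o
  | node _ c, s =>
    match h : getElem? c (s []) with
    | some t => outcome t (fun p => s (s [] :: p))
    | none => none
decreasing_by
  have hm : t ∈ c := by
    exact List.mem_of_getElem? h
  have := List.sizeOf_lt_of_mem hm
  simp only [node.sizeOf_spec]
  omega

/-- The profile `s` re-rooted at position `p`. -/
def shift (s : Profile) (p : List ℕ) : Profile := fun q => s (p ++ q)

/-- The owner of the node at position `p`, if it is internal. -/
def ownerAt (T : GameTree N O) (p : List ℕ) : Option N :=
  match T.subtree p with
  | some (node i _) => some i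
  | _ => none

/-- `p` lies along the play induced by `s`. -/
def OnPlay (s : Profile) (p : List ℕ) : Prop :=
  ∀ q k, (q ++ [k]) <+: p → s q = k

/-- Improvement property: every player who changes strictly improves the outcome. -/
def Iprop (T : GameTree N O) (pref : N → O → O → Prop) (s s' : Profile) : Prop :=
  ∀ p i c, T.subtree p = some (node i c) → s p ≠ s' p →
    ∃ x y, T.outcome s = some x ∧ T.outcome s' = some y ∧ pref i x y

/-- Subgame improvement property. -/
def SIprop (T : GameTree N O) (pref : N → O → O → Prop) (s s' : Profile) : Prop :=
  ∀ p i c, T.subtree p = some (node i c) → s p ≠ s' p →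
    ∃ x y, outcome (node i c) (shift s p) = some x ∧
      outcome (node i c) (shift s' p) = some y ∧ pref i x y

/-- Laziness property: all changed nodes lie along the play induced by `s'`. -/
def Lprop (T : GameTree N O) (s s' : Profile) : Prop :=
  ∀ p, Differs T s s' p → OnPlay s' p

/-- One player property: at most one player changes his strategy. -/
def P1prop (T : GameTree N O) (s s' : Profile) : Prop :=
  ∃ i : N, ∀ p, Differs T s s' p → T.ownerAt p = some i

/-- Atomicity property: at most one node changes. -/
def Aprop (T : GameTree N O) (s s' : Profile) : Prop :=
  ∀ p q, Differs T s s' p → Differs T s s' q → p = q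

/-- Names of the update properties. -/
inductive Upd : Type | I | SI | L | P1 | A
deriving DecidableEq

/-- Interpretation of an update property name. -/
def holds (T : GameTree N O) (pref : N → O → O → Prop) : Upd → Profile → Profile → Prop
  | .I => Iprop T pref
  | .SI => SIprop T pref
  | .L => Lprop T
  | .P1 => P1prop T
  | .A => Aprop T

/-- The X-dynamics: an actual update (between legal profiles) satisfying
all properties in `X`. -/
def XDyn (X : Set Upd) (T : GameTree N O) (pref : N → O → O → Prop)
    (s s' : Profile) : Prop :=
  Legal T s ∧ Legal T s' ∧ (∃ p, Differs T s s' p) ∧ ∀ u ∈ X, holds T pref u s s'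

/-- A dynamics terminates iff there is no infinite update sequence. -/
def Terminates (D : Profile → Profile → Prop) : Prop :=
  ¬ ∃ f : ℕ → Profile, ∀ n, D (f n) (f (n + 1))

/-- `s'` is a deviation from `s` by the coalition `I`. -/
def Deviation (T : GameTree N O) (I : Set N) (s s' : Profile) : Prop :=
  Legal T s' ∧ ∀ p i c, T.subtree p = some (node i c) → i ∉ I → s p = s' p

/-- Nash equilibrium. -/
def IsNE (T : GameTree N O) (pref : N → O → O → Prop) (s : Profile) : Prop :=
  ∀ i s', Deviation T {i} s s' →
    ∀ x y, T.outcome s = some x → T.outcome s' = some y → ¬ pref i x y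

/-- Subgame perfect equilibrium: an NE in every subgame. -/
def IsSPE (T : GameTree N O) (pref : N → O → O → Prop) (s : Profile) : Prop :=
  ∀ p t, T.subtree p = some t → IsNE t pref (shift s p)

/-- Strong Nash equilibrium (Aumann). -/
def IsSNE (T : GameTree N O) (pref : N → O → O → Prop) (s : Profile) : Prop :=
  ∀ I : Set N, I.Nonempty → ∀ s', Deviation T I s s' →
    ∃ i ∈ I, ∀ x y, T.outcome s = some x → T.outcome s' = some y → ¬ pref i x y

/-- A relation is acyclic if it has no cycle. -/
def Acyclic (r : O → O → Prop) : Prop := ∀ x, ¬ Relation.TransGen r x x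

/-- Incomparability. -/
def Incomp (r : O → O → Prop) (x y : O) : Prop := ¬ r x y ∧ ¬ r y x

/-- Strict weak order: irreflexive, transitive, with transitive incomparability. -/
def IsSWO (r : O → O → Prop) : Prop :=
  (∀ x, ¬ r x x) ∧ (∀ x y z, r x y → r y z → r x z) ∧
    (∀ x y z, Incomp r x y → Incomp r y z → Incomp r x z)

/-- Strict linear order: irreflexive, transitive and total. -/
def IsSLO (r : O → O → Prop) : Prop :=
  (∀ x, ¬ r x x) ∧ (∀ x y z, r x y → r y z → r x z) ∧
    (∀ x y, x ≠ y → r x y ∨ r y x)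

/-- Absence of the main pattern. -/
def OutOfMainPattern (pref : N → O → O → Prop) : Prop :=
  ∀ (i j : N) (x y z : O),
    ¬ (pref i x y ∧ pref i y z ∧ pref j y z ∧ pref j z x)

/-- Absence of the secondary pattern. -/
def OutOfSecondaryPattern (pref : N → O → O → Prop) : Prop :=
  ∀ (i j : N) (w x y z : O),
    ¬ (pref i w x ∧ pref i x y ∧ pref i y z ∧
       Incomp (pref j) x z ∧ pref j z w ∧ Incomp (pref j) w y)

/-- Absence of both patterns. -/
def OutOfPattern (pref : N → O → O → Prop) : Prop :=
  OutOfMainPattern pref ∧ OutOfSecondaryPattern pref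

/-- The preferences can be layered: there is an ordered partition of the
outcomes (given by a layer-index function) such that higher layers are
unanimously weakly preferred, and within a layer no two players agree on
one pair while disagreeing on another pair. -/
def CanBeLayered (pref : N → O → O → Prop) : Prop :=
  ∃ ℓ : O → ℕ,
    (∀ x y, ℓ x < ℓ y → ∀ i, ¬ pref i y x) ∧
    (∀ (i j : N) (w x y z : O), ℓ w = ℓ x → ℓ x = ℓ y → ℓ y = ℓ z →
      ¬ (pref i x y ∧ pref j x y ∧ pref i w z ∧ pref j z w))

end GameTree
end SeqGame

/-!
Under Atomicity at most one node `p` changes. If `p` were off the play induced by `s'`, the two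
profiles would agree along that play, so the outcome would not move and Improvement would give
`pref i x x`, contradicting irreflexivity: this is Laziness. One Player holds because only the owner
of `p` changes. No strict ancestor of `p` changes, so both plays pass through `p`, where the outcome
of the whole game equals that of the subgame at `p`: Improvement then is Subgame Improvement.
Since `I` and `A` thus imply every other property, adding any of them to `X` changes nothing.
-/

namespace SeqGame.GameTree

variable {N O : Type}

theorem subtree_node_cons (i : N) (cs : List (GameTree N O)) (k : ℕ) (p : List ℕ) :
    (node i cs).subtree (k :: p) = cs[k]?.bind (subtree · p) := by
  simp only [subtree]
  cases cs[k]? <;> rfl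

theorem subtree_append (T : GameTree N O) (p q : List ℕ) :
    T.subtree (p ++ q) = (T.subtree p).bind (subtree · q) := by
  induction p generalizing T with
  | nil => cases T <;> rfl
  | cons k p ih =>
    cases T with
    | leaf o => rfl
    | node i cs =>
      simp only [List.cons_append, subtree_node_cons]
      cases cs[k]? <;> simp [ih]

theorem exists_subtree_eq_node_of_prefix {T t : GameTree N O} {p q : List ℕ} {k : ℕ}
    (hp : T.subtree p = some t) (hq : q ++ [k] <+: p) :
    ∃ i cs, T.subtree q = some (node i cs) := by
  obtain ⟨r, rfl⟩ := hq
  rw [List.append_assoc, subtree_append] at hp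
  match T.subtree q, hp with
  | some (node i cs), _ => exact ⟨i, cs, rfl⟩
  | some (leaf _), hp => simp [subtree] at hp

theorem onPlay_nil (s : Profile) : OnPlay s [] :=
  fun q k hq => by simpa using hq.length_le

theorem onPlay_cons {s : Profile} {k : ℕ} {p : List ℕ} :
    OnPlay s (k :: p) ↔ s [] = k ∧ OnPlay (shift s [k]) p := by
  constructor
  · intro h
    refine ⟨h [] k ⟨p, rfl⟩, fun q k' ⟨r, hr⟩ => h (k :: q) k' ⟨r, by simp [← hr]⟩⟩
  · rintro ⟨h0, h⟩ (_ | ⟨a, q⟩) k' ⟨r, hr⟩ <;> simp only [List.nil_append, List.cons_append,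
      List.cons.injEq] at hr
    · rw [h0, hr.1]
    · obtain ⟨rfl, hr⟩ := hr
      exact h q k' ⟨r, hr⟩

theorem outcome_node (i : N) (cs : List (GameTree N O)) (s : Profile) :
    (node i cs).outcome s = cs[s []]?.bind (outcome · (shift s [s []])) := by
  rw [outcome]
  split
  next t ht => rw [ht]; rfl
  next ht => rw [ht]; rfl

theorem outcome_congr_of_onPlay :
    ∀ (T : GameTree N O) {s s' : Profile},
      (∀ q i cs, T.subtree q = some (node i cs) → OnPlay s q → s q = s' q) →
      T.outcome s = T.outcome s'
  | leaf _, _, _, _ => by simp [outcome]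
  | node i cs, s, s', h => by
    have h0 : s [] = s' [] := h [] i cs rfl (onPlay_nil s)
    rw [outcome_node, outcome_node, ← h0]
    cases ht : cs[s []]? with
    | none => rfl
    | some t =>
      have hmem := List.mem_of_getElem? ht
      refine outcome_congr_of_onPlay t fun q i' cs' hq hop => ?_
      refine h (s [] :: q) i' cs' (by simpa [subtree_node_cons, ht] using hq) ?_
      exact onPlay_cons.mpr ⟨rfl, hop⟩
decreasing_by
  have := List.sizeOf_lt_of_mem hmem
  simp only [node.sizeOf_spec]
  omega

theorem outcome_eq_outcome_shift_of_onPlay {p : List ℕ} :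
    ∀ {T t : GameTree N O} {s : Profile}, T.subtree p = some t → OnPlay s p →
      T.outcome s = t.outcome (shift s p) := by
  induction p with
  | nil =>
    intro T t s hT _
    cases T <;> cases hT <;> rfl
  | cons k p ih =>
    intro T t s hT hop
    obtain ⟨rfl, hop⟩ := onPlay_cons.mp hop
    cases T with
    | leaf o => cases hT
    | node i cs =>
      rw [subtree_node_cons] at hT
      obtain ⟨t', ht', hT⟩ := Option.bind_eq_some_iff.mp hT
      rw [outcome_node, ht', Option.bind_some, ih hT hop]
      rfl

section Dynamics

variable {T : GameTree N O} {pref : N → O → O → Prop} {s s' : Profile}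

-- A change off the play of `s'` is the only change, so `s` and `s'` agree along that play.
theorem outcome_eq_of_aprop_of_not_onPlay (hA : Aprop T s s') {p : List ℕ}
    (hp : Differs T s s' p) (hnp : ¬ OnPlay s' p) : T.outcome s = T.outcome s' := by
  refine (outcome_congr_of_onPlay T fun q i cs hq hop => ?_).symm
  by_contra hne
  exact hnp (hA p q hp ⟨⟨i, cs, hq⟩, Ne.symm hne⟩ ▸ hop)

theorem lprop_of_iprop_of_aprop (hirr : ∀ i x, ¬ pref i x x) (hI : Iprop T pref s s')
    (hA : Aprop T s s') : Lprop T s s' := by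
  intro p hp
  by_contra hnp
  obtain ⟨i, cs, hT⟩ := hp.1
  obtain ⟨x, y, hx, hy, hxy⟩ := hI p i cs hT hp.2
  rw [← outcome_eq_of_aprop_of_not_onPlay hA hp hnp, hx, Option.some_inj] at hy
  exact hirr i x (hy ▸ hxy)

theorem p1prop_of_aprop [Nonempty N] (hA : Aprop T s s') : P1prop T s s' := by
  by_cases h : ∃ p, Differs T s s' p
  · obtain ⟨p, hp⟩ := h
    obtain ⟨i, cs, hT⟩ := hp.1
    exact ⟨i, fun q hq => by simp [hA q p hq hp, ownerAt, hT]⟩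
  · exact ⟨Classical.arbitrary N, fun p hp => absurd ⟨p, hp⟩ h⟩

-- No strict ancestor of the only changed node changes, so the play of `s` reaches it as well.
theorem onPlay_of_aprop_of_onPlay (hA : Aprop T s s') {p : List ℕ} (hp : Differs T s s' p)
    (hop : OnPlay s' p) : OnPlay s p := by
  intro q k hq
  by_contra hne
  obtain ⟨i, cs, hT⟩ := hp.1
  have hq' : Differs T s s' q :=
    ⟨exists_subtree_eq_node_of_prefix hT hq, fun h => hne (h.trans (hop q k hq))⟩
  obtain ⟨r, hr⟩ := hq
  simpa [hA p q hp hq'] using congrArg List.length hr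

theorem siprop_of_iprop_of_lprop_of_aprop (hI : Iprop T pref s s') (hL : Lprop T s s')
    (hA : Aprop T s s') : SIprop T pref s s' := by
  intro p i cs hT hne
  have hp : Differs T s s' p := ⟨⟨i, cs, hT⟩, hne⟩
  have hop' := hL p hp
  have hop := onPlay_of_aprop_of_onPlay hA hp hop'
  obtain ⟨x, y, hx, hy, hxy⟩ := hI p i cs hT hne
  rw [outcome_eq_outcome_shift_of_onPlay hT hop] at hx
  rw [outcome_eq_outcome_shift_of_onPlay hT hop'] at hy
  exact ⟨x, y, hx, hy, hxy⟩

theorem holds_of_iprop_of_aprop [Nonempty N] (hirr : ∀ i x, ¬ pref i x x)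
    (hI : Iprop T pref s s') (hA : Aprop T s s') : ∀ u, holds T pref u s s'
  | .I => hI
  | .A => hA
  | .L => lprop_of_iprop_of_aprop hirr hI hA
  | .P1 => p1prop_of_aprop hA
  | .SI => siprop_of_iprop_of_lprop_of_aprop hI (lprop_of_iprop_of_aprop hirr hI hA) hA

end Dynamics

end SeqGame.GameTree

open SeqGame GameTree in
/-- Improvement + Atomicity imply Laziness, One Player and Subgame Improvement;
consequently all X-dynamics with {I,A} ⊆ X coincide with the {I,A}-dynamics. -/
theorem stmt_7 {N O : Type} [Nonempty N] (T : GameTree N O)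
    (pref : N → O → O → Prop) (hirr : ∀ i x, ¬ pref i x x) :
    (∀ s s', Iprop T pref s s' → Aprop T s s' →
      Lprop T s s' ∧ P1prop T s s' ∧ SIprop T pref s s') ∧
    (∀ X : Set Upd, Upd.I ∈ X → Upd.A ∈ X →
      ∀ s s', XDyn X T pref s s' ↔ XDyn {Upd.I, Upd.A} T pref s s') := by
  have hIA := fun s s' hI hA => holds_of_iprop_of_aprop (T := T) (s := s) (s' := s') hirr hI hA
  refine ⟨fun s s' hI hA => ⟨hIA s s' hI hA .L, hIA s s' hI hA .P1, hIA s s' hI hA .SI⟩,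
    fun X hIX hAX s s' => ?_⟩
  refine and_congr_right fun _ => and_congr_right fun _ => and_congr_right fun _ => ?_
  refine ⟨fun h u hu => ?_, fun h u _ => hIA s s' (h .I (by simp)) (h .A (by simp)) u⟩
  rcases hu with rfl | rfl
  exacts [h _ hIX, h _ hAX]
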